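/- Let σ, λ > 0, ω(x) = (σ√(2π))^{-1} exp(−x²/(2σ²) + |x|/λ) on ℝ, κ_a(x) = exp(−a|x|) for a > 0, and α ≥ 1. Then: (i) ‖ω/κ_a‖_{L_∞(ℝ)} = (σ√(2π))^{-1} exp(σ²(a + λ^{−1})²/2); (ii) the minimum over a > 0 of ‖κ_a^{1/α}‖_{L_1(ℝ)}^α · ‖ω/κ_a‖_{L_∞(ℝ)} = (2α/a)^α (σ√(2π))^{-1} exp(σ²(a+λ^{−1})²/2) is attained at a_* = (√(1 + 4αλ²/σ²) − 1)/(2λ); and (iii) (‖κ_{a_*}^{1/α}‖_{L_1}^α/‖ω^{1/α}‖_{L_1}^α)·‖ω/κ_{a_*}‖_{L_∞} = (√(2α/π) / (a_* σ (1 + erf(σ/(λ√(2α))))))^α · exp(σ² a_* (a_* + 2/λ)/2). -/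

import Mathlib

open MeasureTheory Real Set
open scoped ENNReal

/-- The error function `erf(z) = (2/√π)∫₀^z e^{−t²} dt`. -/
noncomputable def erf (z : ℝ) : ℝ := 2 / Real.sqrt π * ∫ t in (0:ℝ)..z, Real.exp (-t ^ 2)

/-! `ω / κ_a` is a constant times `exp (-x²/(2σ²) + (a + λ⁻¹)|x|)`, so completing the square
locates its maximum at `|x| = σ²(a + λ⁻¹)`; since it is continuous and Lebesgue measure charges
every open set, this maximum is its essential supremum. The `L₁` norm of `κ_a^{1/α}` is an
elementary exponential integral, while that of `ω^{1/α}` splits into two half-lines on which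
completing the square leaves a shifted Gaussian tail, i.e. a value of `erf`. In `(ii)`, the
logarithm of the objective is `α log (2α/a) + σ²(a + λ⁻¹)²/2`; with `log t ≤ t - 1` at
`t = a / a⋆` it is minimised at the root `a⋆` of `σ² a (a + λ⁻¹) = α`. -/

section EssSup

variable {X E : Type*} [TopologicalSpace X] [MeasurableSpace X] {μ : Measure X}
  [μ.IsOpenPosMeasure] [NormedAddCommGroup E]

theorem enorm_le_eLpNormEssSup_of_continuous {f : X → E} (hf : Continuous f) (x : X) :
    ‖f x‖ₑ ≤ eLpNormEssSup f μ :=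
  (isClosed_le hf.enorm continuous_const).closure_subset
    ((μ.dense_of_ae (ae_le_eLpNormEssSup (f := f))).closure_eq ▸ mem_univ x)

theorem eLpNorm_top_eq_ofReal_of_forall_le {f : X → ℝ} (hf : Continuous f)
    (hf_nonneg : ∀ x, 0 ≤ f x) {x₀ : X} (hmax : ∀ x, f x ≤ f x₀) :
    eLpNorm f ∞ μ = ENNReal.ofReal (f x₀) := by
  rw [eLpNorm_exponent_top]
  refine le_antisymm (eLpNormEssSup_le_of_ae_bound (.of_forall fun x => ?_)) ?_
  · rw [Real.norm_of_nonneg (hf_nonneg x)]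
    exact hmax x
  · rw [← Real.enorm_of_nonneg (hf_nonneg x₀)]
    exact enorm_le_eLpNormEssSup_of_continuous hf x₀

end EssSup

theorem integral_exp_neg_mul_abs {c : ℝ} (hc : 0 < c) :
    ∫ x : ℝ, exp (-(c * |x|)) = 2 / c := by
  rw [integral_comp_abs (f := fun x => exp (-(c * x))),
    integral_comp_mul_left_Ioi (fun x => exp (-x)) 0 hc, mul_zero, integral_exp_neg_Ioi_zero,
    smul_eq_mul, mul_one, div_eq_mul_inv]

theorem integral_Ioi_comp_sub_right (g : ℝ → ℝ) (a m : ℝ) :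
    ∫ x in Ioi a, g (x - m) = ∫ x in Ioi (a - m), g x := by
  have h := (measurePreserving_add_right (volume : Measure ℝ) (-m)).setIntegral_preimage_emb
    (measurableEmbedding_addRight (-m)) g (Ioi (a - m))
  simp only [preimage_add_const_Ioi, sub_neg_eq_add, sub_add_cancel] at h
  simpa only [sub_eq_add_neg] using h

theorem integral_Ioi_neg_exp_neg_sq (w : ℝ) :
    ∫ t in Ioi (-w), exp (-t ^ 2) = √π / 2 * (1 + erf w) := by
  have hint : Integrable (fun t : ℝ => exp (-t ^ 2)) := by
    simpa using integrable_exp_neg_mul_sq one_pos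
  have hneg : ∫ t in (-w)..0, exp (-t ^ 2) = ∫ t in (0 : ℝ)..w, exp (-t ^ 2) := by
    have := intervalIntegral.integral_comp_neg (a := 0) (b := w) fun t => exp (-t ^ 2)
    simp only [neg_sq, neg_zero] at this
    exact this.symm
  have hpi : √π ≠ 0 := (sqrt_pos.mpr pi_pos).ne'
  have hhalf : ∫ t in Ioi (0 : ℝ), exp (-t ^ 2) = √π / 2 := by
    simpa using integral_gaussian_Ioi 1
  rw [← intervalIntegral.integral_interval_add_Ioi hint.integrableOn hint.integrableOn, hneg,
    hhalf, erf]
  field_simp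
  ring

theorem integral_Ioi_exp_neg_sq_sub_div (m : ℝ) {k : ℝ} (hk : 0 < k) :
    ∫ x in Ioi 0, exp (-((x - m) / k) ^ 2) = k * (√π / 2 * (1 + erf (m / k))) := by
  have h := integral_Ioi_comp_sub_right (fun t => exp (-t ^ 2)) 0 (m / k)
  have hscale := integral_comp_mul_left_Ioi (fun y => exp (-(y - m / k) ^ 2)) 0 (inv_pos.mpr hk)
  simp only [mul_zero, inv_inv, smul_eq_mul, zero_sub] at h hscale
  rw [h, integral_Ioi_neg_exp_neg_sq] at hscale
  rw [← hscale]
  congr 1 with x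
  congr 2
  field_simp

theorem neg_sq_div_add_mul_eq {s : ℝ} (hs : s ≠ 0) (b y : ℝ) :
    -y ^ 2 / (2 * s ^ 2) + b * y = s ^ 2 * b ^ 2 / 2 - (y - s ^ 2 * b) ^ 2 / (2 * s ^ 2) := by
  field_simp
  ring

theorem integral_exp_neg_sq_div_add_mul_abs {s : ℝ} (hs : 0 < s) (b : ℝ) :
    ∫ x : ℝ, exp (-x ^ 2 / (2 * s ^ 2) + b * |x|)
      = s * √(2 * π) * exp (s ^ 2 * b ^ 2 / 2) * (1 + erf (s * b / √2)) := by
  have hk : 0 < s * √2 := by positivity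
  have hsq (y : ℝ) : (y - s ^ 2 * b) ^ 2 / (2 * s ^ 2) = ((y - s ^ 2 * b) / (s * √2)) ^ 2 := by
    rw [div_pow, mul_pow, sq_sqrt zero_le_two, mul_comm 2]
  have hm : s ^ 2 * b / (s * √2) = s * b / √2 := by
    field_simp
  have habs := integral_comp_abs (f := fun y => exp (-y ^ 2 / (2 * s ^ 2) + b * y))
  simp only [sq_abs] at habs
  rw [habs]
  simp only [neg_sq_div_add_mul_eq hs.ne', sub_eq_add_neg (s ^ 2 * b ^ 2 / 2), exp_add, hsq,
    integral_const_mul]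
  rw [integral_Ioi_exp_neg_sq_sub_div _ hk, hm, sqrt_mul zero_le_two]
  ring

theorem neg_sq_div_add_mul_le {s : ℝ} (hs : s ≠ 0) (b y : ℝ) :
    -y ^ 2 / (2 * s ^ 2) + b * y ≤ s ^ 2 * b ^ 2 / 2 := by
  rw [neg_sq_div_add_mul_eq hs]
  have : 0 ≤ (y - s ^ 2 * b) ^ 2 / (2 * s ^ 2) := by positivity
  linarith

theorem erf_nonneg {z : ℝ} (hz : 0 ≤ z) : 0 ≤ erf z :=
  mul_nonneg (by positivity)
    (intervalIntegral.integral_nonneg hz fun t _ => (exp_pos _).le)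

theorem rpow_div_mul_exp_le_of_sq_mul_mul_add_eq {K σ c α a₀ a : ℝ} (hK : 0 < K)
    (hα : 0 ≤ α) (ha₀ : 0 < a₀) (ha : 0 < a) (hkey : σ ^ 2 * (a₀ * (a₀ + c)) = α) :
    (K / a₀) ^ α * exp (σ ^ 2 * (a₀ + c) ^ 2 / 2)
      ≤ (K / a) ^ α * exp (σ ^ 2 * (a + c) ^ 2 / 2) := by
  rw [rpow_def_of_pos (div_pos hK ha₀), rpow_def_of_pos (div_pos hK ha), ← exp_add, ← exp_add,
    exp_le_exp, log_div hK.ne' ha₀.ne', log_div hK.ne' ha.ne']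
  have hlog : log a - log a₀ ≤ a / a₀ - 1 := by
    rw [← log_div ha.ne' ha₀.ne']
    exact log_le_sub_one_of_pos (div_pos ha ha₀)
  have hlin : α * (a / a₀ - 1) = σ ^ 2 * (a₀ + c) * (a - a₀) := by
    rw [← hkey]
    field_simp
  nlinarith [mul_le_mul_of_nonneg_left hlog hα, mul_nonneg (sq_nonneg σ) (sq_nonneg (a - a₀))]

theorem rpow_div_mul_exp_eq {σ lam α a C G : ℝ} (hσ : 0 < σ) (hlam : lam ≠ 0) (hα : 0 < α)
    (ha : 0 < a) (hC : C ≠ 0) (hG : 0 < G) :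
    (2 * α / a) ^ α / (C * exp (σ ^ 2 / (2 * lam ^ 2)) * (σ * √(2 * π * α) * G) ^ α)
        * (C * exp (σ ^ 2 * (a + lam⁻¹) ^ 2 / 2))
      = (√(2 * α / π) / (a * σ * G)) ^ α * exp (σ ^ 2 * a * (a + 2 / lam) / 2) := by
  have hsqrt : √(2 * α / π) * √(2 * π * α) = 2 * α := by
    rw [← sqrt_mul (by positivity), show 2 * α / π * (2 * π * α) = (2 * α) ^ 2 by
      field_simp, sqrt_sq (by positivity)]
  have hbase : 2 * α / a / (σ * √(2 * π * α) * G) = √(2 * α / π) / (a * σ * G) := by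
    rw [div_div, div_eq_div_iff (by positivity) (by positivity)]
    linear_combination (-(a * σ * G)) * hsqrt
  have hexp :
      σ ^ 2 * (a + lam⁻¹) ^ 2 / 2 = σ ^ 2 * a * (a + 2 / lam) / 2 + σ ^ 2 / (2 * lam ^ 2) := by
    field_simp
    ring
  rw [← hbase, div_rpow (x := 2 * α / a) (by positivity) (by positivity), hexp, exp_add]
  field_simp

section Weights

variable {σ lam α : ℝ}

noncomputable section

-- `ω` and `κ_a`; `optimalRate σ lam α` is `a⋆`, the positive root of `σ² a (a + λ⁻¹) = α`.
def gaussExpWeight (σ lam x : ℝ) : ℝ :=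
  (σ * √(2 * π))⁻¹ * exp (-x ^ 2 / (2 * σ ^ 2) + |x| / lam)

def expKernel (a x : ℝ) : ℝ := exp (-(a * |x|))

def optimalRate (σ lam α : ℝ) : ℝ := (√(1 + 4 * α * lam ^ 2 / σ ^ 2) - 1) / (2 * lam)

end

theorem gaussExpWeight_div_expKernel (σ lam a x : ℝ) :
    gaussExpWeight σ lam x / expKernel a x
      = (σ * √(2 * π))⁻¹ * exp (-x ^ 2 / (2 * σ ^ 2) + (a + lam⁻¹) * |x|) := by
  rw [gaussExpWeight, expKernel, mul_div_assoc, ← exp_sub]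
  ring_nf

theorem eLpNorm_gaussExpWeight_div_expKernel_top (hσ : 0 < σ) {a : ℝ} (hb : 0 ≤ a + lam⁻¹) :
    eLpNorm (fun x => gaussExpWeight σ lam x / expKernel a x) ∞ volume
      = ENNReal.ofReal ((σ * √(2 * π))⁻¹ * exp (σ ^ 2 * (a + lam⁻¹) ^ 2 / 2)) := by
  simp only [gaussExpWeight_div_expKernel]
  have hval : -(σ ^ 2 * (a + lam⁻¹)) ^ 2 / (2 * σ ^ 2) + (a + lam⁻¹) * |σ ^ 2 * (a + lam⁻¹)|
      = σ ^ 2 * (a + lam⁻¹) ^ 2 / 2 := by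
    rw [abs_of_nonneg (by positivity), neg_sq_div_add_mul_eq hσ.ne', sub_self]
    simp
  rw [eLpNorm_top_eq_ofReal_of_forall_le (x₀ := σ ^ 2 * (a + lam⁻¹)) (by fun_prop)
    (fun x => by positivity) fun x => ?_, hval]
  rw [hval, ← sq_abs x]
  gcongr
  exact neg_sq_div_add_mul_le hσ.ne' _ _

theorem integral_expKernel_rpow {a : ℝ} (ha : 0 < a) (hα : 0 < α) :
    ∫ x, expKernel a x ^ (1 / α) = 2 * α / a := by
  simp only [expKernel, ← exp_mul]
  rw [← div_div_eq_mul_div, ← integral_exp_neg_mul_abs (div_pos ha hα)]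
  congr 1 with x
  ring_nf

theorem integral_gaussExpWeight_rpow_rpow (hσ : 0 < σ) (hlam : 0 < lam) (hα : 0 < α) :
    (∫ x, gaussExpWeight σ lam x ^ (1 / α)) ^ α
      = (σ * √(2 * π))⁻¹ * exp (σ ^ 2 / (2 * lam ^ 2))
        * (σ * √(2 * π * α) * (1 + erf (σ / (lam * √(2 * α))))) ^ α := by
  set C := (σ * √(2 * π))⁻¹
  have hC : 0 < C := by positivity
  have hsα : 0 < σ * √α := by positivity
  have hα_sq : √α ^ 2 = α := sq_sqrt hα.le
  have hpt : ∀ x, gaussExpWeight σ lam x ^ (1 / α) = C ^ (1 / α)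
      * exp (-x ^ 2 / (2 * (σ * √α) ^ 2) + (lam * α)⁻¹ * |x|) := by
    intro x
    rw [gaussExpWeight, mul_rpow hC.le (exp_pos _).le, ← exp_mul]
    congr 2
    rw [mul_pow, hα_sq]
    field_simp
  have hexp : (σ * √α) ^ 2 * (lam * α)⁻¹ ^ 2 / 2 = σ ^ 2 / (2 * lam ^ 2) * (1 / α) := by
    rw [mul_pow, hα_sq]
    field_simp
  have herf : σ * √α * (lam * α)⁻¹ / √2 = σ / (lam * √(2 * α)) := by
    rw [sqrt_mul zero_le_two]
    field_simp
    rw [hα_sq]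
  have hI : ∫ x, gaussExpWeight σ lam x ^ (1 / α)
      = (C * exp (σ ^ 2 / (2 * lam ^ 2))) ^ (1 / α)
        * (σ * √(2 * π * α) * (1 + erf (σ / (lam * √(2 * α))))) := by
    simp only [hpt, integral_const_mul]
    rw [integral_exp_neg_sq_div_add_mul_abs hsα, hexp, herf, exp_mul,
      mul_rpow hC.le (exp_pos _).le, sqrt_mul (by positivity : (0 : ℝ) ≤ 2 * π) α]
    ring
  have herf_nonneg := erf_nonneg (by positivity : 0 ≤ σ / (lam * √(2 * α)))
  rw [hI, mul_rpow (by positivity) (by positivity), ← rpow_mul (by positivity),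
    one_div_mul_cancel hα.ne', rpow_one]

theorem optimalRate_pos (hσ : 0 < σ) (hlam : 0 < lam) (hα : 0 < α) :
    0 < optimalRate σ lam α := by
  have : 1 < √(1 + 4 * α * lam ^ 2 / σ ^ 2) := by
    rw [lt_sqrt zero_le_one]
    have : 0 < 4 * α * lam ^ 2 / σ ^ 2 := by positivity
    linarith
  exact div_pos (by linarith) (by positivity)

theorem sq_mul_optimalRate_mul_add_inv (hσ : σ ≠ 0) (hlam : lam ≠ 0) (hα : 0 ≤ α) :
    σ ^ 2 * (optimalRate σ lam α * (optimalRate σ lam α + lam⁻¹)) = α := by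
  have hs : σ ^ 2 * √(1 + 4 * α * lam ^ 2 / σ ^ 2) ^ 2 = σ ^ 2 + 4 * α * lam ^ 2 := by
    rw [sq_sqrt (by positivity)]
    field_simp
  unfold optimalRate
  generalize √(1 + 4 * α * lam ^ 2 / σ ^ 2) = r at hs ⊢
  field_simp
  linear_combination hs

end Weights

/-- `ω(x) = (σ√(2π))⁻¹ exp(−x²/(2σ²) + |x|/λ)` (Gaussian `ϱ`, exponential
`ψ`), `κ_a(x) = e^{−a|x|}`, `α ≥ 1`:
(i) `‖ω/κ_a‖_{L_∞(ℝ)} = (σ√(2π))⁻¹ exp(σ²(a + λ⁻¹)²/2)`;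
(ii) `a ↦ ‖κ_a^{1/α}‖₁^α ‖ω/κ_a‖_∞ = (2α/a)^α (σ√(2π))⁻¹ exp(σ²(a+λ⁻¹)²/2)` attains its
minimum over `a > 0` at `a⋆ = (√(1 + 4αλ²/σ²) − 1)/(2λ)`;
(iii) `(‖κ_{a⋆}^{1/α}‖₁^α/‖ω^{1/α}‖₁^α)‖ω/κ_{a⋆}‖_∞
  = (√(2α/π)/(a⋆σ(1 + erf(σ/(λ√(2α))))))^α exp(σ²a⋆(a⋆ + 2/λ)/2)`. -/
theorem stmt_14 (σ lam : ℝ) (hσ : 0 < σ) (hlam : 0 < lam)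
    (α : ℝ) (hα : 1 ≤ α) (ω : ℝ → ℝ) (κ : ℝ → ℝ → ℝ) (astar : ℝ)
    (hω : ω = fun x : ℝ =>
      (σ * Real.sqrt (2 * π))⁻¹ * Real.exp (-x ^ 2 / (2 * σ ^ 2) + |x| / lam))
    (hκ : κ = fun (a x : ℝ) => Real.exp (-(a * |x|)))
    (hastar : astar = (Real.sqrt (1 + 4 * α * lam ^ 2 / σ ^ 2) - 1) / (2 * lam)) :
    (∀ a : ℝ, 0 < a →
        eLpNorm (fun x => ω x / κ a x) ⊤ volume
          = ENNReal.ofReal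
              ((σ * Real.sqrt (2 * π))⁻¹ * Real.exp (σ ^ 2 * (a + lam⁻¹) ^ 2 / 2)))
    ∧ (∀ a : ℝ, 0 < a →
        (2 * α / astar) ^ α * ((σ * Real.sqrt (2 * π))⁻¹
            * Real.exp (σ ^ 2 * (astar + lam⁻¹) ^ 2 / 2))
          ≤ (2 * α / a) ^ α * ((σ * Real.sqrt (2 * π))⁻¹
              * Real.exp (σ ^ 2 * (a + lam⁻¹) ^ 2 / 2)))
    ∧ (∀ a : ℝ, 0 < a →
        ENNReal.ofReal ((∫ x : ℝ, κ a x ^ (1 / α)) ^ α)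
            * eLpNorm (fun x => ω x / κ a x) ⊤ volume
          = ENNReal.ofReal ((2 * α / a) ^ α * ((σ * Real.sqrt (2 * π))⁻¹
              * Real.exp (σ ^ 2 * (a + lam⁻¹) ^ 2 / 2))))
    ∧ ENNReal.ofReal
          ((∫ x : ℝ, κ astar x ^ (1 / α)) ^ α / (∫ x : ℝ, ω x ^ (1 / α)) ^ α)
          * eLpNorm (fun x => ω x / κ astar x) ⊤ volume
        = ENNReal.ofReal
            ((Real.sqrt (2 * α / π)
                / (astar * σ * (1 + erf (σ / (lam * Real.sqrt (2 * α)))))) ^ α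
              * Real.exp (σ ^ 2 * astar * (astar + 2 / lam) / 2)) := by
  have hα₀ : 0 < α := by linarith
  obtain rfl : ω = gaussExpWeight σ lam := hω
  obtain rfl : κ = expKernel := hκ
  obtain rfl : astar = optimalRate σ lam α := hastar
  have hastar_pos := optimalRate_pos hσ hlam hα₀
  have hsup (a : ℝ) (ha : 0 < a) :=
    eLpNorm_gaussExpWeight_div_expKernel_top (lam := lam) (a := a) hσ (by positivity)
  refine ⟨hsup, fun a ha => ?_, fun a ha => ?_, ?_⟩
  · have := rpow_div_mul_exp_le_of_sq_mul_mul_add_eq (K := 2 * α) (by positivity) hα₀.le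
      hastar_pos ha (sq_mul_optimalRate_mul_add_inv hσ.ne' hlam.ne' hα₀.le)
    simpa only [mul_left_comm _ (σ * √(2 * π))⁻¹] using
      mul_le_mul_of_nonneg_left this (by positivity : (0 : ℝ) ≤ (σ * √(2 * π))⁻¹)
  · rw [integral_expKernel_rpow ha hα₀, hsup a ha, ← ENNReal.ofReal_mul (by positivity)]
  · have herf := erf_nonneg (by positivity : 0 ≤ σ / (lam * √(2 * α)))
    rw [integral_expKernel_rpow hastar_pos hα₀, integral_gaussExpWeight_rpow_rpow hσ hlam hα₀,
      hsup _ hastar_pos, ← ENNReal.ofReal_mul (by positivity),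
      rpow_div_mul_exp_eq hσ hlam.ne' hα₀ hastar_pos (by positivity) (by positivity)]
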